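/- arXiv:1612.03246 — 2 statements merged into one kernel-verified Lean document; each statement's English description precedes it below -/
import Mathlib

section
/- If there exist m paths U_1, …, U_m, each contained in [0, L] and each of cost at most T̂, such that every target in X is seen from some point of U_1 ∪ … ∪ U_m, then every target in X is seen from some viewpoint in V_1 ∪ … ∪ V_m produced by the street construction. (If the construction fails to cover some target, then the guess T̂ is strictly below the optimal cost.) -/
/-- The street construction (Algorithm 2) in the interval model of visibility along a
chain-visible curve `[0, L]`.  Targets `x ∈ X` have visibility intervals
`[a x, b x] ⊆ [0, L]`.  `Gstar` is a set of minimum cardinality seeing every target.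
Starting from `l 0 = min_x b x`, for each `i < m` the algorithm sets
`r i := min (l i + T) L`, collects `W i := Gstar ∩ (l i, r i)`, truncates `W i` to its
`⌈T / tm⌉` smallest elements (redefining `r i` as `max (W i)`) whenever
`|W i| > T / tm`, sets `V i := {l i} ∪ W i ∪ {r i}`, and moves to
`l (i+1) := min {b x : a x > r i}` (or `r i` when no target starts after `r i`). -/
structure StreetData (X : Type*) [Fintype X] [Nonempty X] where
  a : X → ℝ
  b : X → ℝ
  hab : ∀ x, a x ≤ b x
  L : ℝ
  hL : 0 < L
  ha0 : ∀ x, 0 ≤ a x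
  hbL : ∀ x, b x ≤ L
  tm : ℝ
  htm : 0 < tm
  T : ℝ
  hT : 0 < T
  m : ℕ
  hm : 1 ≤ m
  Gstar : Finset ℝ
  hGsub : ↑Gstar ⊆ Set.Icc 0 L
  hGsees : ∀ x, ∃ v ∈ Gstar, a x ≤ v ∧ v ≤ b x
  hGmin : ∀ S : Finset ℝ, ↑S ⊆ Set.Icc 0 L →
    (∀ x, ∃ v ∈ S, a x ≤ v ∧ v ≤ b x) → Gstar.card ≤ S.card
  l : ℕ → ℝ
  r : ℕ → ℝ
  W : ℕ → Finset ℝ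
  V : ℕ → Finset ℝ
  hl0 : IsLeast (Set.range b) (l 0)
  hstep_trunc : ∀ i < m,
    (((Gstar.filter (fun g => l i < g ∧ g < min (l i + T) L)).card : ℝ) > T / tm →
      W i ⊆ Gstar.filter (fun g => l i < g ∧ g < min (l i + T) L) ∧
      (W i).card = ⌈T / tm⌉₊ ∧
      (∀ w ∈ W i, ∀ g ∈ Gstar.filter (fun g => l i < g ∧ g < min (l i + T) L),
        g ≤ w → g ∈ W i) ∧
      IsGreatest (↑(W i) : Set ℝ) (r i))
  hstep_no_trunc : ∀ i < m,
    (¬ ((Gstar.filter (fun g => l i < g ∧ g < min (l i + T) L)).card : ℝ) > T / tm →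
      W i = Gstar.filter (fun g => l i < g ∧ g < min (l i + T) L) ∧
      r i = min (l i + T) L)
  hV : ∀ i < m, V i = insert (l i) (insert (r i) (W i))
  hlsucc_ex : ∀ i < m, (∃ x, r i < a x) →
    IsLeast {t : ℝ | ∃ x, r i < a x ∧ t = b x} (l (i + 1))
  hlsucc_nex : ∀ i < m, (¬ ∃ x, r i < a x) → l (i + 1) = r i

/-!
Targets starting at or before `r (m - 1)` are seen by the construction: such a target is seen by
`l i`, by `r i`, or by the point of `Gstar` seeing it, which `W i` keeps. Suppose a target `x`
starts beyond `r (m - 1)`. The targets realising `l 0, …, l (m - 1)`, together with `x`, have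
visibility intervals in the pairwise disjoint bands `(r (s - 1), l s]`, so every cover has at least
`m + 1` points; this settles the case `T ≤ tm`, where every path is a single point.
Otherwise every path has fewer than `⌈T / tm⌉` points, and by an exchange argument `Gstar` has
at most two more points in an interval than the union of the paths. A truncating step carries
`⌈T / tm⌉ + 1` points of `Gstar`, so a run of `d` consecutive truncating steps needs `d + 1`
paths, while a non-truncating step spans length `T`, which no path crosses. Summing over the runs
gives `m + 1` paths out of `m`.
-/

open Finset

def SeesAll {X : Type*} (a b : X → ℝ) (S : Finset ℝ) : Prop :=
  ∀ x, ∃ v ∈ S, a x ≤ v ∧ v ≤ b x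

/-- Exchange argument: inside an order-connected set `I`, a minimum cover `G` can be replaced
by the points of any other cover `S` together with the two extreme points of `G` in `I`. -/
theorem card_filter_le_card_filter_add_two {X : Type*} {a b : X → ℝ} {K I : Set ℝ}
    [DecidablePred (· ∈ I)] {G S : Finset ℝ} (hI : I.OrdConnected) (hGK : ↑G ⊆ K)
    (hSK : ↑S ⊆ K) (hG : SeesAll a b G) (hS : SeesAll a b S)
    (hGmin : ∀ C : Finset ℝ, ↑C ⊆ K → SeesAll a b C → #G ≤ #C) :
    #(G.filter (· ∈ I)) ≤ #(S.filter (· ∈ I)) + 2 := by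
  set GI := G.filter (· ∈ I)
  rcases GI.eq_empty_or_nonempty with hempty | hne
  · simp [hempty]
  set C := insert (GI.min' hne) (insert (GI.max' hne)
    (G.filter (· ∉ I) ∪ S.filter (· ∈ I)))
  have hGI : GI ⊆ G := filter_subset _ _
  have hCK : ↑C ⊆ K := by
    intro z hz
    simp only [C, coe_insert, coe_union, coe_filter, Set.mem_insert_iff, Set.mem_union] at hz
    rcases hz with rfl | rfl | ⟨hz, -⟩ | ⟨hz, -⟩
    · exact hGK (hGI (GI.min'_mem hne))
    · exact hGK (hGI (GI.max'_mem hne))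
    · exact hGK hz
    · exact hSK hz
  have hCsees : SeesAll a b C := by
    intro x
    obtain ⟨g, hg, hga, hgb⟩ := hG x
    by_cases hgI : g ∈ I
    swap
    · exact ⟨g, by simp [C, hg, hgI], hga, hgb⟩
    have hgGI : g ∈ GI := mem_filter.2 ⟨hg, hgI⟩
    obtain ⟨s, hs, hsa, hsb⟩ := hS x
    by_cases hsI : s ∈ I
    · exact ⟨s, by simp [C, hs, hsI], hsa, hsb⟩
    rcases lt_or_gt_of_ne (ne_of_mem_of_not_mem hgI hsI).symm with hsg | hgs
    · have hmin : s < GI.min' hne := by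
        by_contra! h
        exact hsI (hI.out (mem_filter.1 (GI.min'_mem hne)).2 hgI ⟨h, hsg.le⟩)
      exact ⟨GI.min' hne, mem_insert_self _ _, hsa.trans hmin.le,
        (GI.min'_le g hgGI).trans hgb⟩
    · have hmax : GI.max' hne < s := by
        by_contra! h
        exact hsI (hI.out hgI (mem_filter.1 (GI.max'_mem hne)).2 ⟨hgs.le, h⟩)
      exact ⟨GI.max' hne, mem_insert_of_mem (mem_insert_self _ _),
        hga.trans (GI.le_max' g hgGI), hmax.le.trans hsb⟩
  have hsplit : #GI + #(G.filter (· ∉ I)) = #G := card_filter_add_card_filter_not _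
  have hCcard : #C ≤ #(G.filter (· ∉ I)) + #(S.filter (· ∈ I)) + 2 :=
    (card_insert_le _ _).trans (Nat.succ_le_succ ((card_insert_le _ _).trans
      (Nat.succ_le_succ (card_union_le _ _))))
  have := hGmin C hCK hCsees
  omega

noncomputable def pathCost (tm : ℝ) (U : Finset ℝ) (hU : U.Nonempty) : ℝ :=
  U.max' hU - U.min' hU + #U * tm

section pathCost

variable {tm T : ℝ} {U : Finset ℝ} {hU : U.Nonempty}

theorem sub_lt_of_pathCost_le (htm : 0 < tm) (h : pathCost tm U hU ≤ T) {z z' : ℝ}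
    (hz : z ∈ U) (hz' : z' ∈ U) : z' - z < T := by
  have : (1 : ℝ) ≤ #U := by exact_mod_cast hU.card_pos
  have := U.le_max' z' hz'
  have := U.min'_le z hz
  unfold pathCost at h
  nlinarith

theorem card_le_one_of_pathCost_le (htm : 0 < tm) (hT : T ≤ tm) (h : pathCost tm U hU ≤ T) :
    #U ≤ 1 := by
  have := U.min'_le _ (U.max'_mem hU)
  have : (#U : ℝ) ≤ 1 := by
    unfold pathCost at h
    nlinarith
  exact_mod_cast this

theorem card_lt_of_pathCost_le (htm : 0 < tm) (hT : 1 < T / tm) (h : pathCost tm U hU ≤ T) :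
    (#U : ℝ) < T / tm := by
  rw [lt_div_iff₀ htm]
  rcases Nat.lt_or_ge 1 #U with h1 | h1
  · have := U.min'_lt_max'_of_card h1
    unfold pathCost at h
    linarith
  · have : #U = 1 := le_antisymm h1 hU.card_pos
    rw [one_lt_div htm] at hT
    simpa [this] using hT

end pathCost

section meeting

variable {ι : Type*} [Fintype ι] (U : ι → Finset ℝ)

def meeting (I : Set ℝ) [DecidablePred (· ∈ I)] : Finset ι :=
  univ.filter fun j => ∃ z ∈ U j, z ∈ I

variable {U}

theorem mem_meeting {I : Set ℝ} [DecidablePred (· ∈ I)] {j : ι} :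
    j ∈ meeting U I ↔ ∃ z ∈ U j, z ∈ I := by
  simp [meeting]

theorem meeting_mono {I J : Set ℝ} [DecidablePred (· ∈ I)] [DecidablePred (· ∈ J)]
    (h : I ⊆ J) : meeting U I ⊆ meeting U J :=
  fun j hj => by
    obtain ⟨z, hz, hzI⟩ := mem_meeting.1 hj
    exact mem_meeting.2 ⟨z, hz, h hzI⟩

theorem card_filter_biUnion_le_card_meeting_mul {I : Set ℝ} [DecidablePred (· ∈ I)] {c : ℕ}
    (hcap : ∀ j, #(U j) ≤ c) : #((univ.biUnion U).filter (· ∈ I)) ≤ #(meeting U I) * c :=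
  calc #((univ.biUnion U).filter (· ∈ I)) ≤ #((meeting U I).biUnion U) :=
        card_le_card fun z hz => by
          obtain ⟨hzU, hzI⟩ := mem_filter.1 hz
          obtain ⟨j, -, hj⟩ := mem_biUnion.1 hzU
          exact mem_biUnion.2 ⟨j, mem_meeting.2 ⟨z, hj, hzI⟩, hj⟩
    _ ≤ ∑ j ∈ meeting U I, #(U j) := card_biUnion_le
    _ ≤ #(meeting U I) * c := by simpa using sum_le_card_nsmul _ _ c fun j _ => hcap j

end meeting

namespace StreetData

variable {X : Type*} [Fintype X] [Nonempty X] (D : StreetData X) {i j e s : ℕ} {x : X}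

noncomputable def window (i : ℕ) : Finset ℝ :=
  D.Gstar.filter (fun g => D.l i < g ∧ g < min (D.l i + D.T) D.L)

def Truncates (i : ℕ) : Prop := D.T / D.tm < #(D.window i)

theorem mem_window {g : ℝ} :
    g ∈ D.window i ↔ g ∈ D.Gstar ∧ D.l i < g ∧ g < min (D.l i + D.T) D.L :=
  mem_filter

theorem W_subset_window (hi : i < D.m) : D.W i ⊆ D.window i := by
  by_cases h : D.Truncates i
  · exact (D.hstep_trunc i hi h).1
  · exact (D.hstep_no_trunc i hi h).1.le

theorem r_mem_window (hi : i < D.m) (h : D.Truncates i) : D.r i ∈ D.window i :=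
  D.W_subset_window hi (D.hstep_trunc i hi h).2.2.2.1

theorem mem_W_of_le_r (hi : i < D.m) {g : ℝ} (hg : g ∈ D.window i) (hgr : g ≤ D.r i) :
    g ∈ D.W i := by
  by_cases h : D.Truncates i
  · obtain ⟨-, -, hdown, hgreat⟩ := D.hstep_trunc i hi h
    exact hdown _ hgreat.1 g hg hgr
  · exact (D.hstep_no_trunc i hi h).1 ▸ hg

theorem le_r_of_mem_W (hi : i < D.m) (h : D.Truncates i) {w : ℝ} (hw : w ∈ D.W i) :
    w ≤ D.r i :=
  (D.hstep_trunc i hi h).2.2.2.2 hw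

theorem r_le_min (hi : i < D.m) : D.r i ≤ min (D.l i + D.T) D.L := by
  by_cases h : D.Truncates i
  · exact ((D.mem_window.1 (D.r_mem_window hi h)).2.2).le
  · exact (D.hstep_no_trunc i hi h).2.le

theorem r_le_L (hi : i < D.m) : D.r i ≤ D.L :=
  (D.r_le_min hi).trans (min_le_right _ _)

theorem l_zero_le_b (x : X) : D.l 0 ≤ D.b x :=
  D.hl0.2 ⟨x, rfl⟩

theorem l_succ_le_b (hi : i < D.m) (h : D.r i < D.a x) : D.l (i + 1) ≤ D.b x :=
  (D.hlsucc_ex i hi ⟨x, h⟩).2 ⟨x, h, rfl⟩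

theorem r_le_l_succ (hi : i < D.m) : D.r i ≤ D.l (i + 1) := by
  by_cases h : ∃ x, D.r i < D.a x
  · obtain ⟨x, hx, hlx⟩ := (D.hlsucc_ex i hi h).1
    exact hlx ▸ hx.le.trans (D.hab x)
  · exact (D.hlsucc_nex i hi h).ge

theorem l_le_L (hi : i ≤ D.m) : D.l i ≤ D.L := by
  cases i with
  | zero => obtain ⟨x, hx⟩ := D.hl0.1; exact hx ▸ D.hbL x
  | succ i =>
    by_cases h : ∃ x, D.r i < D.a x
    · obtain ⟨x, -, hlx⟩ := (D.hlsucc_ex i hi h).1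
      exact hlx ▸ D.hbL x
    · exact (D.hlsucc_nex i hi h).trans_le (D.r_le_L hi)

theorem l_le_r (hi : i < D.m) : D.l i ≤ D.r i := by
  by_cases h : D.Truncates i
  · exact ((D.mem_window.1 (D.r_mem_window hi h)).2.1).le
  · rw [(D.hstep_no_trunc i hi h).2]
    exact le_min (le_add_of_nonneg_right D.hT.le) (D.l_le_L hi.le)

theorem l_le_l (hij : i ≤ j) (hj : j ≤ D.m) : D.l i ≤ D.l j := by
  induction j, hij using Nat.le_induction with
  | base => rfl
  | succ j _ ih =>
    exact (ih (by omega)).trans ((D.l_le_r (by omega)).trans (D.r_le_l_succ (by omega)))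

theorem r_le_l (hij : i < j) (hj : j ≤ D.m) : D.r i ≤ D.l j :=
  (D.r_le_l_succ (by omega)).trans (D.l_le_l hij hj)

theorem r_le_r (hij : i ≤ j) (hj : j < D.m) : D.r i ≤ D.r j := by
  rcases hij.eq_or_lt with rfl | hij
  · rfl
  · exact (D.r_le_l hij hj.le).trans (D.l_le_r hj)

theorem exists_mem_V_of_l_lt_a (hi : i < D.m) (hl : D.l i < D.a x) (hr : D.a x ≤ D.r i) :
    ∃ v ∈ D.V i, D.a x ≤ v ∧ v ≤ D.b x := by
  rw [D.hV i hi]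
  obtain ⟨g, hg, hga, hgb⟩ := D.hGsees x
  by_cases hgr : D.r i ≤ g
  · exact ⟨D.r i, by simp, hr, hgr.trans hgb⟩
  · have hgw : g ∈ D.window i :=
      D.mem_window.2 ⟨hg, hl.trans_le hga, (lt_of_not_ge hgr).trans_le (D.r_le_min hi)⟩
    exact ⟨g, by simp [D.mem_W_of_le_r hi hgw (le_of_not_ge hgr)], hga, hgb⟩

theorem exists_mem_V_of_a_le_r (hi : i < D.m) (hx : D.a x ≤ D.r i) :
    ∃ j ≤ i, ∃ v ∈ D.V j, D.a x ≤ v ∧ v ≤ D.b x := by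
  induction i with
  | zero =>
    by_cases hl : D.a x ≤ D.l 0
    · exact ⟨0, le_rfl, D.l 0, by simp [D.hV 0 hi], hl, D.l_zero_le_b x⟩
    · exact ⟨0, le_rfl, D.exists_mem_V_of_l_lt_a hi (lt_of_not_ge hl) hx⟩
  | succ i ih =>
    by_cases hprev : D.a x ≤ D.r i
    · obtain ⟨j, hj, hv⟩ := ih (by omega) hprev
      exact ⟨j, by omega, hv⟩
    by_cases hl : D.a x ≤ D.l (i + 1)
    · exact ⟨i + 1, le_rfl, D.l (i + 1), by simp [D.hV _ hi], hl,
        D.l_succ_le_b (by omega) (lt_of_not_ge hprev)⟩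
    · exact ⟨i + 1, le_rfl, D.exists_mem_V_of_l_lt_a hi (lt_of_not_ge hl) hx⟩

theorem r_lt_a (hx : D.r (D.m - 1) < D.a x) (hi : i < D.m) : D.r i < D.a x :=
  (D.r_le_r (by omega) (by omega)).trans_lt hx

theorem r_eq_add_of_not_truncates (hx : D.r (D.m - 1) < D.a x) (hi : i < D.m)
    (h : ¬ D.Truncates i) : D.r i = D.l i + D.T := by
  have hr := (D.hstep_no_trunc i hi h).2
  have hlt : min (D.l i + D.T) D.L < D.L :=
    hr ▸ (D.r_lt_a hx hi).trans_le ((D.hab x).trans (D.hbL x))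
  rw [hr, min_eq_left ((min_lt_iff.1 hlt).resolve_right (lt_irrefl _)).le]

def band (i e : ℕ) : Set ℝ := {z | (0 < i → D.r (i - 1) < z) ∧ (e < D.m → z ≤ D.l e)}

noncomputable instance (i e : ℕ) : DecidablePred (· ∈ D.band i e) :=
  fun _ => inferInstanceAs (Decidable (_ ∧ _))

theorem band_ordConnected : (D.band i e).OrdConnected :=
  ⟨fun _ hz _ hz' _ hw => ⟨fun h => (hz.1 h).trans_le hw.1, fun h => hw.2.trans (hz'.2 h)⟩⟩

theorem band_subset_band {i' e' : ℕ} (hi : i' ≤ i) (hiM : i ≤ D.m) (he : e ≤ e') :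
    D.band i e ⊆ D.band i' e' :=
  fun _ hz => ⟨fun h => (D.r_le_r (by omega) (by omega)).trans_lt (hz.1 (by omega)),
    fun h => (hz.2 (by omega)).trans (D.l_le_l he h.le)⟩

theorem lt_of_mem_band (hst : s < j) (hj : j ≤ D.m) {z z' : ℝ} (hz : z ∈ D.band s s)
    (hz' : z' ∈ D.band j j) : z < z' :=
  calc z ≤ D.l s := hz.2 (by omega)
    _ ≤ D.r (j - 1) := (D.l_le_r (by omega)).trans (D.r_le_r (by omega) (by omega))
    _ < z' := hz'.1 (by omega)

/-- The targets realising `l s` (and, for `s = m`, the target beyond `r (m - 1)`) have their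
visibility intervals in `band s s`. -/
theorem exists_mem_band_of_seesAll (hx : D.r (D.m - 1) < D.a x) (hs : s ≤ D.m) {S : Finset ℝ}
    (hS : SeesAll D.a D.b S) : ∃ v ∈ S, v ∈ D.band s s := by
  suffices ∃ y, ∀ v, D.a y ≤ v → v ≤ D.b y → v ∈ D.band s s by
    obtain ⟨y, hy⟩ := this
    obtain ⟨v, hv, hva, hvb⟩ := hS y
    exact ⟨v, hv, hy v hva hvb⟩
  rcases hs.lt_or_eq with hs | rfl
  · cases s with
    | zero =>
      obtain ⟨y, hy⟩ := D.hl0.1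
      exact ⟨y, fun v _ hv => ⟨by omega, fun _ => hy ▸ hv⟩⟩
    | succ s =>
      obtain ⟨y, hya, hyb⟩ := (D.hlsucc_ex s (by omega) ⟨x, D.r_lt_a hx (by omega)⟩).1
      exact ⟨y, fun v hv hv' => ⟨fun _ => hya.trans_le hv, fun _ => hyb ▸ hv'⟩⟩
  · exact ⟨x, fun v hv _ => ⟨fun _ => hx.trans_le hv, fun h => absurd h (lt_irrefl _)⟩⟩

theorem succ_le_card_of_seesAll (hx : D.r (D.m - 1) < D.a x) {S : Finset ℝ}
    (hS : SeesAll D.a D.b S) : D.m + 1 ≤ #S := by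
  choose! v hvS hvband using fun s (hs : s ≤ D.m) => D.exists_mem_band_of_seesAll hx hs hS
  have hinj : Set.InjOn v (range (D.m + 1)) := by
    refine StrictMonoOn.injOn fun s hs j hj hsj => ?_
    simp only [coe_range, Set.mem_Iio] at hs hj
    exact D.lt_of_mem_band hsj (by omega) (hvband s (by omega)) (hvband j (by omega))
  calc D.m + 1 = #((range (D.m + 1)).image v) := by rw [card_image_of_injOn hinj, card_range]
    _ ≤ #S := card_le_card fun z hz => by
        obtain ⟨s, hs, rfl⟩ := mem_image.1 hz
        exact hvS s (by simpa [Nat.lt_succ_iff] using hs)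

theorem card_Gstar_band_succ (hx : D.r (D.m - 1) < D.a x) (hie : i ≤ e) (he : e < D.m)
    (htr : D.Truncates e) :
    #(D.Gstar.filter (· ∈ D.band i e)) + ⌈D.T / D.tm⌉₊ + 1 ≤
      #(D.Gstar.filter (· ∈ D.band i (e + 1))) := by
  obtain ⟨hWwin, hWcard, -⟩ := D.hstep_trunc e he htr
  obtain ⟨g, hg, hgband⟩ := D.exists_mem_band_of_seesAll hx (s := e + 1) he D.hGsees
  set A := D.Gstar.filter (· ∈ D.band i e)
  have hA : ∀ z ∈ A, z ≤ D.l e := fun z hz => (mem_filter.1 hz).2.2 he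
  have hW : ∀ w ∈ D.W e, D.l e < w ∧ w ≤ D.r e := fun w hw =>
    ⟨(D.mem_window.1 (hWwin hw)).2.1, D.le_r_of_mem_W he htr hw⟩
  have hgr : D.r e < g := hgband.1 (by omega)
  have hdisj : Disjoint A (D.W e) :=
    disjoint_left.2 fun z hzA hzW => (hA z hzA).not_gt (hW z hzW).1
  have hgnot : g ∉ A ∪ D.W e := by
    rw [mem_union, not_or]
    exact ⟨fun h => (hA g h).not_gt ((D.l_le_r he).trans_lt hgr),
      fun h => (hW g h).2.not_gt hgr⟩
  have hsub : insert g (A ∪ D.W e) ⊆ D.Gstar.filter (· ∈ D.band i (e + 1)) := by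
    refine insert_subset (mem_filter.2 ⟨hg, D.band_subset_band (by omega) he le_rfl hgband⟩)
      (union_subset (fun z hz => ?_) fun w hw => mem_filter.2 ⟨(D.mem_window.1 (hWwin hw)).1,
        fun hi => ?_, fun h => (hW w hw).2.trans (D.r_le_l_succ he)⟩)
    · obtain ⟨hzG, hzband⟩ := mem_filter.1 hz
      exact mem_filter.2 ⟨hzG, D.band_subset_band le_rfl (hie.trans he.le) (Nat.le_succ e) hzband⟩
    · exact (D.r_le_l (by omega) he.le).trans_lt (hW w hw).1
  have := card_le_card hsub
  rwa [card_insert_of_notMem hgnot, card_union_of_disjoint hdisj, hWcard] at this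

theorem card_Gstar_band (hx : D.r (D.m - 1) < D.a x) (hie : i ≤ e) (he : e ≤ D.m)
    (htr : ∀ s, i ≤ s → s < e → D.Truncates s) :
    (e - i) * (⌈D.T / D.tm⌉₊ + 1) + 1 ≤ #(D.Gstar.filter (· ∈ D.band i e)) := by
  induction e, hie using Nat.le_induction with
  | base =>
    obtain ⟨g, hg, hgband⟩ := D.exists_mem_band_of_seesAll hx he D.hGsees
    simpa using card_pos.2 ⟨g, mem_filter.2 ⟨hg, hgband⟩⟩
  | succ e hie ih =>
    have := D.card_Gstar_band_succ hx hie (by omega) (htr e hie (by omega))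
    have := ih (by omega) fun s h1 h2 => htr s h1 (by omega)
    rw [Nat.succ_sub hie, Nat.succ_mul]
    omega

variable {ι : Type*} [Fintype ι] {U : ι → Finset ℝ}

/-- Each truncating step contributes `⌈T / tm⌉ + 1` points of `Gstar`, while a path contributes
fewer than `⌈T / tm⌉` points, so a run of `e - i` truncating steps needs `e - i + 1` paths. -/
theorem le_card_meeting_band_of_truncates (hx : D.r (D.m - 1) < D.a x)
    (hSK : ↑(univ.biUnion U) ⊆ Set.Icc 0 D.L) (hS : SeesAll D.a D.b (univ.biUnion U))
    (hcap : ∀ j, #(U j) < ⌈D.T / D.tm⌉₊) (hie : i ≤ e) (he : e ≤ D.m)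
    (htr : ∀ s, i ≤ s → s < e → D.Truncates s) :
    e - i + 1 ≤ #(meeting U (D.band i e)) := by
  obtain ⟨c, hc⟩ : ∃ c, ⌈D.T / D.tm⌉₊ = c + 1 :=
    Nat.exists_eq_add_one.2 (Nat.ceil_pos.2 (div_pos D.hT D.htm))
  have hG := D.card_Gstar_band hx hie he htr
  have hloc := card_filter_le_card_filter_add_two (I := D.band i e) D.band_ordConnected
    D.hGsub hSK D.hGsees hS D.hGmin
  have hpaths := card_filter_biUnion_le_card_meeting_mul (I := D.band i e) (c := c)
    fun j => Nat.le_of_lt_succ (hc ▸ hcap j)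
  have hQ : 0 < #(meeting U (D.band i e)) := by
    obtain ⟨v, hv, hvband⟩ := D.exists_mem_band_of_seesAll hx he hS
    obtain ⟨j, -, hj⟩ := mem_biUnion.1 hv
    exact card_pos.2 ⟨j, mem_meeting.2 ⟨v, hj, D.band_subset_band hie he le_rfl hvband⟩⟩
  rw [hc] at hG
  nlinarith

/-- A path seeing a point at most `l e` and a point beyond `r e = l e + T` would be longer than
`T`. -/
theorem disjoint_meeting_band (hx : D.r (D.m - 1) < D.a x)
    (hdiam : ∀ j, ∀ z ∈ U j, ∀ z' ∈ U j, z' - z < D.T) (he : e < D.m) (hnt : ¬ D.Truncates e)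
    (i e' : ℕ) : Disjoint (meeting U (D.band i e)) (meeting U (D.band (e + 1) e')) := by
  refine disjoint_left.2 fun j hj hj' => ?_
  obtain ⟨z, hz, hzband⟩ := mem_meeting.1 hj
  obtain ⟨z', hz', hzband'⟩ := mem_meeting.1 hj'
  have hzl : z ≤ D.l e := hzband.2 he
  have hrz : D.r e < z' := hzband'.1 (Nat.succ_pos e)
  rw [D.r_eq_add_of_not_truncates hx he hnt] at hrz
  linarith [hdiam j z hz z' hz']

theorem le_card_meeting_band (hx : D.r (D.m - 1) < D.a x)
    (hSK : ↑(univ.biUnion U) ⊆ Set.Icc 0 D.L) (hS : SeesAll D.a D.b (univ.biUnion U))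
    (hcap : ∀ j, #(U j) < ⌈D.T / D.tm⌉₊) (hdiam : ∀ j, ∀ z ∈ U j, ∀ z' ∈ U j, z' - z < D.T)
    (hi : i ≤ D.m) : D.m - i + 1 ≤ #(meeting U (D.band i D.m)) := by
  induction hn : D.m - i using Nat.strong_induction_on generalizing i with
  | _ n ih =>
  subst hn
  by_cases hall : ∀ s, i ≤ s → s < D.m → D.Truncates s
  · exact D.le_card_meeting_band_of_truncates hx hSK hS hcap hi le_rfl hall
  push Not at hall
  classical
  obtain ⟨hie, hem, hnt⟩ := Nat.find_spec hall
  set e := Nat.find hall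
  have hrun := D.le_card_meeting_band_of_truncates hx hSK hS hcap hie hem.le fun s h1 h2 =>
    by_contra fun h => Nat.find_min hall h2 ⟨h1, by omega, h⟩
  have hrest := ih (D.m - (e + 1)) (by omega) (i := e + 1) hem rfl
  have hdisj := D.disjoint_meeting_band hx hdiam hem hnt i D.m
  have hsub : meeting U (D.band i e) ∪ meeting U (D.band (e + 1) D.m) ⊆
      meeting U (D.band i D.m) :=
    union_subset (meeting_mono (D.band_subset_band le_rfl hi hem.le))
      (meeting_mono (D.band_subset_band (by omega) hem le_rfl))
  have := card_le_card hsub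
  rw [card_union_of_disjoint hdisj] at this
  omega

end StreetData

/-- If there exist `m` paths in `[0, L]`, each of cost at most `T`, jointly seeing every
target, then every target is seen from some viewpoint in `V 1 ∪ … ∪ V m` produced by the
street construction. -/
theorem stmt11 {X : Type*} [Fintype X] [Nonempty X] (D : StreetData X)
    (U : Fin D.m → Finset ℝ) (hUne : ∀ i, (U i).Nonempty)
    (hUsub : ∀ i, ↑(U i) ⊆ Set.Icc 0 D.L)
    (hUcost : ∀ i, (U i).max' (hUne i) - (U i).min' (hUne i) + (U i).card * D.tm ≤ D.T)
    (hUsees : ∀ x : X, ∃ i, ∃ v ∈ U i, D.a x ≤ v ∧ v ≤ D.b x) :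
    ∀ x : X, ∃ i < D.m, ∃ v ∈ D.V i, D.a x ≤ v ∧ v ≤ D.b x := by
  intro x
  have hm := D.hm
  by_cases hx : D.a x ≤ D.r (D.m - 1)
  · obtain ⟨j, hj, hv⟩ := D.exists_mem_V_of_a_le_r (by omega) hx
    exact ⟨j, by omega, hv⟩
  replace hx := lt_of_not_ge hx
  have hSK : ↑(univ.biUnion U) ⊆ Set.Icc 0 D.L := by simpa using hUsub
  have hS : SeesAll D.a D.b (univ.biUnion U) := fun y => by
    obtain ⟨j, v, hv, hva⟩ := hUsees y
    exact ⟨v, mem_biUnion.2 ⟨j, mem_univ _, hv⟩, hva⟩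
  rcases le_or_gt (D.T / D.tm) 1 with hsmall | hlarge
  · have hsingle j : #(U j) ≤ 1 :=
      card_le_one_of_pathCost_le D.htm ((div_le_one D.htm).1 hsmall) (hUcost j)
    have hcard : #(univ.biUnion U) ≤ D.m :=
      calc #(univ.biUnion U) ≤ ∑ j, #(U j) := card_biUnion_le
        _ ≤ D.m := by simpa using sum_le_card_nsmul univ (fun j => #(U j)) 1 fun j _ => hsingle j
    have := D.succ_le_card_of_seesAll hx hS
    omega
  · have := D.le_card_meeting_band hx hSK hS
      (fun j => Nat.lt_ceil.2 (card_lt_of_pathCost_le D.htm hlarge (hUcost j)))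
      (fun j z hz z' hz' => sub_lt_of_pathCost_le D.htm (hUcost j) hz hz') (Nat.zero_le _)
    have := card_le_univ (meeting U (D.band 0 D.m))
    simp only [Fintype.card_fin] at this
    omega
end

section
/- Let P be a compact subset of the plane ℝ × ℝ whose complement is connected (a model of a polygon without holes). Let s, t, x ∈ P and suppose the segment joining s and t is contained in P. Then the set {v ∈ segment[s, t] : the segment joining v and x is contained in P} is a convex subset of the plane; in particular, the intersection of the visibility region of x with the straight-line chord [s, t] is empty or a connected chain (chain-visibility of straight lines inside polygons without holes). -/
/-!
If `a` and `b` lie on the chord and see `x`, the triangle `a b x` has all three edges in `P`.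
A point of the triangle outside `P` would lie in a component of `Pᶜ` enclosed by these edges,
whereas `Pᶜ` is connected and, `P` being bounded, also has points outside the triangle. Hence the
whole triangle lies in `P`, and with it the segment from any point of `[a, b]` to `x`.
-/

open Set Module

section

variable {E : Type*} [AddCommGroup E] [Module ℝ E] {a b c : E}

lemma add_add_smul_mem_segment_union {α β γ : ℝ} (hα : 0 ≤ α) (hβ : 0 ≤ β) (hγ : 0 ≤ γ)
    (hsum : α + β + γ = 1) (hzero : α = 0 ∨ β = 0 ∨ γ = 0) :
    α • a + β • b + γ • c ∈ segment ℝ a b ∪ segment ℝ b c ∪ segment ℝ a c := by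
  rcases hzero with rfl | rfl | rfl
  · exact Or.inl (Or.inr ⟨β, γ, hβ, hγ, by linarith, by simp⟩)
  · exact Or.inr ⟨α, γ, hα, hγ, by linarith, by simp⟩
  · exact Or.inl (Or.inl ⟨α, β, hα, hβ, by linarith, by simp⟩)

lemma Collinear.convexHull_triple_subset (h : Collinear ℝ ({a, b, c} : Set E)) :
    convexHull ℝ {a, b, c} ⊆ segment ℝ a b ∪ segment ℝ b c ∪ segment ℝ a c := by
  rcases h.wbtw_or_wbtw_or_wbtw with h | h | h
  · refine (convexHull_min ?_ (convex_segment a c)).trans subset_union_right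
    exact insert_subset (left_mem_segment ℝ a c) <|
      insert_subset h.mem_segment <| singleton_subset_iff.2 (right_mem_segment ℝ a c)
  · refine (convexHull_min ?_ (convex_segment a b)).trans
      (subset_union_left.trans subset_union_left)
    exact insert_subset (left_mem_segment ℝ a b) <| insert_subset (right_mem_segment ℝ a b) <|
      singleton_subset_iff.2 (segment_symm ℝ b a ▸ h.mem_segment)
  · refine (convexHull_min ?_ (convex_segment b c)).trans
      (subset_union_right.trans subset_union_left)
    exact insert_subset (segment_symm ℝ c b ▸ h.mem_segment) <|
      insert_subset (left_mem_segment ℝ b c) <| singleton_subset_iff.2 (right_mem_segment ℝ b c)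

end

section

variable {E : Type*} [NormedAddCommGroup E] [NormedSpace ℝ E] {a b c : E}

lemma frontier_convexHull_triple_subset_of_not_collinear (hE : finrank ℝ E = 2)
    (h : ¬ Collinear ℝ ({a, b, c} : Set E)) :
    frontier (convexHull ℝ {a, b, c}) ⊆ segment ℝ a b ∪ segment ℝ b c ∪ segment ℝ a c := by
  have : FiniteDimensional ℝ E := .of_finrank_pos (by omega)
  have hind : AffineIndependent ℝ ![a, b, c] := affineIndependent_iff_not_collinear_set.mpr h
  let B : AffineBasis (Fin 3) ℝ E :=
    ⟨![a, b, c], hind, hind.affineSpan_eq_top_iff_card_eq_finrank_add_one.mpr (by simp [hE])⟩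
  have hrange : range B = {a, b, c} := by
    change range ![a, b, c] = _
    rw [Matrix.range_cons, Matrix.range_cons_cons_empty, singleton_union]
  rintro y ⟨hy_cl, hy_int⟩
  rw [((toFinite {a, b, c}).isCompact_convexHull (𝕜 := ℝ)).isClosed.closure_eq, ← hrange,
    B.convexHull_eq_nonneg_coord] at hy_cl
  rw [← hrange, B.interior_convexHull] at hy_int
  obtain ⟨i, hi⟩ : ∃ i, B.coord i y = 0 := by
    simp only [mem_ofPred_eq, not_forall, not_lt] at hy_int
    exact hy_int.imp fun i hi ↦ le_antisymm hi (hy_cl i)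
  rw [← B.linear_combination_coord_eq_self y, Fin.sum_univ_three]
  refine add_add_smul_mem_segment_union (hy_cl 0) (hy_cl 1) (hy_cl 2) ?_ ?_
  · exact (Fin.sum_univ_three _).symm.trans (B.sum_coord_apply_eq_one y)
  · fin_cases i
    exacts [Or.inl hi, Or.inr (Or.inl hi), Or.inr (Or.inr hi)]

lemma frontier_convexHull_triple_subset (hE : finrank ℝ E = 2) :
    frontier (convexHull ℝ {a, b, c}) ⊆ segment ℝ a b ∪ segment ℝ b c ∪ segment ℝ a c := by
  by_cases h : Collinear ℝ ({a, b, c} : Set E)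
  · refine frontier_subset_closure.trans ?_
    rw [((toFinite {a, b, c}).isCompact_convexHull (𝕜 := ℝ)).isClosed.closure_eq]
    exact h.convexHull_triple_subset
  · exact frontier_convexHull_triple_subset_of_not_collinear hE h

end

lemma closure_subset_of_frontier_subset {X : Type*} [TopologicalSpace X] {P T : Set X}
    (hP : IsPreconnected Pᶜ) (hfr : frontier T ⊆ P) (hT : ¬ Pᶜ ⊆ T) : closure T ⊆ P := by
  have hcover : Pᶜ ⊆ interior T ∪ (closure T)ᶜ := by
    intro z hzP
    by_cases hz : z ∈ closure T
    · exact Or.inl (by_contra fun hzi ↦ hzP (hfr ⟨hz, hzi⟩))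
    · exact Or.inr hz
  have hdisj : Disjoint (interior T) (closure T)ᶜ :=
    disjoint_compl_right.mono_left interior_subset_closure
  rcases hP.subset_or_subset isOpen_interior isClosed_closure.isOpen_compl hdisj hcover with h | h
  · exact absurd (h.trans interior_subset) hT
  · exact compl_subset_compl.1 h

lemma convexHull_triple_subset_of_segment_subset {E : Type*} [NormedAddCommGroup E]
    [NormedSpace ℝ E] (hE : finrank ℝ E = 2) {P : Set E} (hP : Bornology.IsBounded P)
    (hPc : IsPreconnected Pᶜ) {a b c : E} (hab : segment ℝ a b ⊆ P)
    (hbc : segment ℝ b c ⊆ P) (hac : segment ℝ a c ⊆ P) : convexHull ℝ {a, b, c} ⊆ P := by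
  have : Nontrivial E := nontrivial_of_finrank_eq_succ hE
  have hT : Bornology.IsBounded (convexHull ℝ {a, b, c}) :=
    ((toFinite {a, b, c}).isCompact_convexHull (𝕜 := ℝ)).isBounded
  have hcompl : ¬ Pᶜ ⊆ convexHull ℝ {a, b, c} := fun h ↦
    NormedSpace.unbounded_univ ℝ E (compl_subset_iff_union.1 h ▸ hP.union hT)
  refine subset_closure.trans (closure_subset_of_frontier_subset hPc ?_ hcompl)
  exact (frontier_convexHull_triple_subset hE).trans (union_subset (union_subset hab hbc) hac)

theorem stmt16_general (P : Set (ℝ × ℝ)) (hP : IsCompact P) (hconn : IsConnected Pᶜ)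
    (s t x : ℝ × ℝ)
    (hst : segment ℝ s t ⊆ P) :
    Convex ℝ {v ∈ segment ℝ s t | segment ℝ v x ⊆ P} := by
  rintro a ⟨has, hax⟩ b ⟨hbs, hbx⟩ μ ν hμ hν hμν
  have hab : segment ℝ a b ⊆ segment ℝ s t := (convex_segment s t).segment_subset has hbs
  have htri : convexHull ℝ {a, b, x} ⊆ P :=
    convexHull_triple_subset_of_segment_subset (by simp) hP.isBounded hconn.isPreconnected
      (hab.trans hst) hbx hax
  have hv : μ • a + ν • b ∈ convexHull ℝ {a, b, x} :=
    segment_subset_convexHull (by simp) (by simp) ⟨μ, ν, hμ, hν, hμν, rfl⟩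
  refine ⟨convex_segment s t has hbs hμ hν hμν, ?_⟩
  exact ((convex_convexHull ℝ _).segment_subset hv (subset_convexHull ℝ _ (by simp))).trans htri

/-- Chain-visibility of straight chords inside polygons without holes: for a compact
`P ⊆ ℝ × ℝ` with connected complement, points `s, t, x ∈ P` with the segment `[s, t]`
contained in `P`, the set of points `v` of the segment `[s, t]` from which `x` is
visible (i.e. `segment v x ⊆ P`) is a convex subset of the plane; in particular the
intersection of the visibility region of `x` with the chord is empty or a connected
chain. -/
theorem stmt16 (P : Set (ℝ × ℝ)) (hP : IsCompact P) (hconn : IsConnected Pᶜ)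
    (s t x : ℝ × ℝ) (hs : s ∈ P) (ht : t ∈ P) (hx : x ∈ P)
    (hst : segment ℝ s t ⊆ P) :
    Convex ℝ {v ∈ segment ℝ s t | segment ℝ v x ⊆ P} :=
  stmt16_general P hP hconn s t x hst
end
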